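/- (Theorem 1, Item 1, tractability characterization for Λ^all, eigenvalue-counting form.) Let b be a prime, α, β > 1 reals, and let 0 < γ_j^{(1)} ≤ 1 and 0 < γ_j^{(2)} ≤ 1 for all j. Then there exist constants C, τ ≥ 0 such that N(ε,s,t) ≤ C ε^{-τ} for all ε ∈ (0,1) and all s,t ∈ ℕ, if and only if s_γ < ∞. -/

import Mathlib

open scoped BigOperators

/-- The Walsh-space decay function ρ_{α,γ} : ℕ → ℝ,
    ρ_{α,γ}(0) = 1 and ρ_{α,γ}(k) = γ·b^{-α·⌊log_b k⌋} for k ≥ 1. -/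
noncomputable def rho (b : ℕ) (α γ : ℝ) (k : ℕ) : ℝ :=
  if k = 0 then 1 else γ * (b : ℝ) ^ (-(α * (Nat.log b k : ℝ)))

/-- The Korobov-space decay function r_{β,γ} : ℤ → ℝ,
    r_{β,γ}(0) = 1 and r_{β,γ}(l) = γ·|l|^{-β} for l ≠ 0. -/
noncomputable def rK (β γ : ℝ) (l : ℤ) : ℝ :=
  if l = 0 then 1 else γ * |(l : ℝ)| ^ (-β)

/-- N(ε,s,t): the number of pairs (k,l) ∈ ℕ^s × ℤ^t with
    ρ_{α,γ^{(1)}}(k)·r_{β,γ^{(2)}}(l) > ε²; this equals the information complexity of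
    L₂-approximation in the hybrid Walsh–Korobov space for the class Λ^all. -/
noncomputable def Ncount (b : ℕ) (α β : ℝ) (γ1 γ2 : ℕ → ℝ) (ε : ℝ) (s t : ℕ) : ℕ :=
  {p : (Fin s → ℕ) × (Fin t → ℤ) |
    (∏ j : Fin s, rho b α (γ1 j) (p.1 j)) * (∏ j : Fin t, rK β (γ2 j) (p.2 j)) > ε ^ 2}.ncard

/-- The sum exponent s_γ = inf{κ > 0 : ∑_j (γ_j^{(1)})^κ < ∞ and ∑_j (γ_j^{(2)})^κ < ∞},
    with inf ∅ = ∞ (an element of ℝ≥0∞). -/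
noncomputable def sGamma (γ1 γ2 : ℕ → ℝ) : ENNReal :=
  sInf {x : ENNReal | ∃ κ : ℝ, 0 < κ ∧ x = ENNReal.ofReal κ ∧
    Summable (fun j => γ1 j ^ κ) ∧ Summable (fun j => γ2 j ^ κ)}

/-!
Upper bound: by Markov's inequality, `N(ε,s,t) ε^{2τ}` is at most the sum of the `τ`-th powers
of all eigenvalues, and this sum factorises as
`∏_j (∑_k ρ_j(k)^τ) · ∏_j (∑_l r_j(l)^τ) ≤ ∏_j (1 + c γ_j^τ) ≤ exp (c ∑_j γ_j^τ)` as soon as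
`ατ > 1` and `βτ > 1`; it is finite when `∑_j γ_j^τ < ∞`.

Lower bound: the unit vector `e_j` carries the eigenvalue `γ_j`, so a bound `N ≤ C ε^{-τ}` gives
`#{j : γ_j > δ} ≤ C δ^{-τ/2}`. Grouping the `γ_j` into dyadic shells then shows
`∑_j γ_j^{τ/2+1} < ∞`.
-/

open Finset

theorem Finset.prod_le_of_mem_of_le_one {ι : Type*} {s : Finset ι} {f : ι → ℝ}
    (h₀ : ∀ j ∈ s, 0 ≤ f j) (h₁ : ∀ j ∈ s, f j ≤ 1) {i : ι} (hi : i ∈ s) :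
    ∏ j ∈ s, f j ≤ f i := by
  classical
  rw [← mul_prod_erase s f hi]
  exact mul_le_of_le_one_right (h₀ i hi)
    (prod_le_one (fun j hj => h₀ j (mem_of_mem_erase hj)) fun j hj => h₁ j (mem_of_mem_erase hj))

theorem Set.ncard_mul_le_sum {X : Type*} {S : Set X} {F : Finset X} (hSF : S ⊆ F)
    {w : X → ℝ} {c : ℝ} (hw : ∀ x ∈ F, 0 ≤ w x) (hc : ∀ x ∈ S, c ≤ w x) :
    (S.ncard : ℝ) * c ≤ ∑ x ∈ F, w x := by
  have hS : S.Finite := F.finite_toSet.subset hSF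
  rw [S.ncard_eq_toFinset_card hS, ← nsmul_eq_mul]
  calc _ ≤ ∑ x ∈ hS.toFinset, w x := card_nsmul_le_sum _ _ _ (by simpa using hc)
    _ ≤ ∑ x ∈ F, w x :=
      sum_le_sum_of_subset_of_nonneg (by simpa using hSF) fun x hx _ => hw x hx

theorem finite_setOf_lt_of_summable_rpow {X : Type*} {f : X → ℝ} {τ c : ℝ}
    (hτ : 0 < τ) (hc : 0 < c) (hs : Summable fun x => f x ^ τ) :
    {x | c < f x}.Finite := by
  have hsmall : ∀ᶠ x in Filter.cofinite, f x ^ τ < c ^ τ :=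
    hs.tendsto_cofinite_zero.eventually (gt_mem_nhds (Real.rpow_pos_of_pos hc τ))
  refine (Filter.eventually_cofinite.mp hsmall).subset fun x hx => ?_
  exact not_lt.mpr (Real.rpow_le_rpow hc.le (le_of_lt hx) hτ.le)

section ProductWeights

variable {ι κ X Y : Type*} [Fintype ι] [Fintype κ] {f : ι → X → ℝ} {g : κ → Y → ℝ}

theorem setOf_lt_mul_prod_subset (hf₀ : ∀ i x, 0 ≤ f i x) (hf₁ : ∀ i x, f i x ≤ 1)
    (hg₀ : ∀ k y, 0 ≤ g k y) (hg₁ : ∀ k y, g k y ≤ 1) (c : ℝ) :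
    {p : (ι → X) × (κ → Y) | c < (∏ i, f i (p.1 i)) * ∏ k, g k (p.2 k)} ⊆
      (Set.univ.pi fun i => {x | c < f i x}) ×ˢ (Set.univ.pi fun k => {y | c < g k y}) := by
  rintro ⟨x, y⟩ hp
  have hA₀ : 0 ≤ ∏ i, f i (x i) := prod_nonneg fun i _ => hf₀ i _
  have hB₀ : 0 ≤ ∏ k, g k (y k) := prod_nonneg fun k _ => hg₀ k _
  have hA₁ : ∏ i, f i (x i) ≤ 1 := prod_le_one (fun i _ => hf₀ i _) fun i _ => hf₁ i _
  have hB₁ : ∏ k, g k (y k) ≤ 1 := prod_le_one (fun k _ => hg₀ k _) fun k _ => hg₁ k _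
  have hcA : c < ∏ i, f i (x i) := hp.trans_le (mul_le_of_le_one_right hA₀ hB₁)
  have hcB : c < ∏ k, g k (y k) := hp.trans_le (mul_le_of_le_one_left hB₀ hA₁)
  refine ⟨fun i _ => hcA.trans_le ?_, fun k _ => hcB.trans_le ?_⟩
  · exact prod_le_of_mem_of_le_one (fun j _ => hf₀ j _) (fun j _ => hf₁ j _) (mem_univ i)
  · exact prod_le_of_mem_of_le_one (fun j _ => hg₀ j _) (fun j _ => hg₁ j _) (mem_univ k)

theorem finite_setOf_lt_mul_prod (hf₀ : ∀ i x, 0 ≤ f i x) (hf₁ : ∀ i x, f i x ≤ 1)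
    (hg₀ : ∀ k y, 0 ≤ g k y) (hg₁ : ∀ k y, g k y ≤ 1) {τ c : ℝ} (hτ : 0 < τ) (hc : 0 < c)
    (hfs : ∀ i, Summable fun x => f i x ^ τ) (hgs : ∀ k, Summable fun y => g k y ^ τ) :
    {p : (ι → X) × (κ → Y) | c < (∏ i, f i (p.1 i)) * ∏ k, g k (p.2 k)}.Finite :=
  ((Set.Finite.pi fun i => finite_setOf_lt_of_summable_rpow hτ hc (hfs i)).prod
    (Set.Finite.pi fun k => finite_setOf_lt_of_summable_rpow hτ hc (hgs k))).subset
    (setOf_lt_mul_prod_subset hf₀ hf₁ hg₀ hg₁ c)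

theorem ncard_setOf_lt_mul_prod_mul_rpow_le (hf₀ : ∀ i x, 0 ≤ f i x) (hf₁ : ∀ i x, f i x ≤ 1)
    (hg₀ : ∀ k y, 0 ≤ g k y) (hg₁ : ∀ k y, g k y ≤ 1) {τ c : ℝ} (hτ : 0 < τ) (hc : 0 < c)
    (hfs : ∀ i, Summable fun x => f i x ^ τ) (hgs : ∀ k, Summable fun y => g k y ^ τ) :
    ({p : (ι → X) × (κ → Y) | c < (∏ i, f i (p.1 i)) * ∏ k, g k (p.2 k)}.ncard : ℝ) * c ^ τ ≤
      (∏ i, ∑' x, f i x ^ τ) * ∏ k, ∑' y, g k y ^ τ := by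
  classical
  let E i := (finite_setOf_lt_of_summable_rpow hτ hc (hfs i)).toFinset
  let E' k := (finite_setOf_lt_of_summable_rpow hτ hc (hgs k)).toFinset
  have hsub : {p : (ι → X) × (κ → Y) | c < (∏ i, f i (p.1 i)) * ∏ k, g k (p.2 k)} ⊆
      ↑(Fintype.piFinset E ×ˢ Fintype.piFinset E') := by
    simpa [E, E', Fintype.coe_piFinset] using setOf_lt_mul_prod_subset hf₀ hf₁ hg₀ hg₁ c
  have hprod₀ : ∀ p : (ι → X) × (κ → Y), 0 ≤ (∏ i, f i (p.1 i)) * ∏ k, g k (p.2 k) :=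
    fun p => mul_nonneg (prod_nonneg fun i _ => hf₀ i _) (prod_nonneg fun k _ => hg₀ k _)
  calc _ ≤ ∑ p ∈ Fintype.piFinset E ×ˢ Fintype.piFinset E',
        ((∏ i, f i (p.1 i)) * ∏ k, g k (p.2 k)) ^ τ :=
        Set.ncard_mul_le_sum hsub (fun p _ => Real.rpow_nonneg (hprod₀ p) τ)
          fun p hp => Real.rpow_le_rpow hc.le (le_of_lt hp) hτ.le
    _ = (∏ i, ∑ x ∈ E i, f i x ^ τ) * ∏ k, ∑ y ∈ E' k, g k y ^ τ := by
        rw [prod_univ_sum, prod_univ_sum, sum_mul_sum, sum_product]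
        refine sum_congr rfl fun x _ => sum_congr rfl fun y _ => ?_
        rw [Real.mul_rpow (prod_nonneg fun i _ => hf₀ i _) (prod_nonneg fun k _ => hg₀ k _),
          Real.finsetProd_rpow _ _ (fun i _ => hf₀ i _),
          Real.finsetProd_rpow _ _ (fun k _ => hg₀ k _)]
    _ ≤ (∏ i, ∑' x, f i x ^ τ) * ∏ k, ∑' y, g k y ^ τ := by
        have hf_pow : ∀ i x, 0 ≤ f i x ^ τ := fun i x => Real.rpow_nonneg (hf₀ i x) τ
        have hg_pow : ∀ k y, 0 ≤ g k y ^ τ := fun k y => Real.rpow_nonneg (hg₀ k y) τ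
        exact mul_le_mul
          (prod_le_prod (fun i _ => sum_nonneg fun x _ => hf_pow i x)
            fun i _ => (hfs i).sum_le_tsum _ fun x _ => hf_pow i x)
          (prod_le_prod (fun k _ => sum_nonneg fun y _ => hg_pow k y)
            fun k _ => (hgs k).sum_le_tsum _ fun y _ => hg_pow k y)
          (prod_nonneg fun k _ => sum_nonneg fun y _ => hg_pow k y)
          (prod_nonneg fun i _ => tsum_nonneg fun x => hf_pow i x)

end ProductWeights

theorem sum_rpow_le_one_add_mul_tsum {X : Type*} {f g : X → ℝ} {x₀ : X} {γ τ : ℝ}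
    (hγ : 0 ≤ γ) (hg : ∀ x, 0 ≤ g x) (hgs : Summable fun x => g x ^ τ) (hf₀ : f x₀ = 1)
    (hf : ∀ x ≠ x₀, f x = γ * g x) (F : Finset X) :
    ∑ x ∈ F, f x ^ τ ≤ 1 + γ ^ τ * ∑' x, g x ^ τ := by
  classical
  have hf_nonneg : ∀ x, 0 ≤ f x := fun x => by
    by_cases hx : x = x₀
    · rw [hx, hf₀]; exact zero_le_one
    · rw [hf x hx]; exact mul_nonneg hγ (hg x)
  calc ∑ x ∈ F, f x ^ τ ≤ ∑ x ∈ insert x₀ F, f x ^ τ :=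
        sum_le_sum_of_subset_of_nonneg (subset_insert _ _) fun x _ _ =>
          Real.rpow_nonneg (hf_nonneg x) τ
    _ = 1 + γ ^ τ * ∑ x ∈ F.erase x₀, g x ^ τ := by
        rw [← add_sum_erase _ _ (mem_insert_self x₀ F), erase_insert_eq_erase, hf₀,
          Real.one_rpow, mul_sum]
        refine congrArg _ (sum_congr rfl fun x hx => ?_)
        rw [hf x (ne_of_mem_erase hx), Real.mul_rpow hγ (hg x)]
    _ ≤ 1 + γ ^ τ * ∑' x, g x ^ τ := by
        gcongr
        exact hgs.sum_le_tsum _ fun x _ => Real.rpow_nonneg (hg x) τ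

theorem prod_one_add_mul_le_exp_tsum {a : ℕ → ℝ} (ha : ∀ j, 0 ≤ a j) (hs : Summable a)
    {C : ℝ} (hC : 0 ≤ C) (s : ℕ) :
    ∏ j : Fin s, (1 + a j * C) ≤ Real.exp ((∑' j, a j) * C) := by
  calc ∏ j : Fin s, (1 + a j * C) ≤ Real.exp (∑ j : Fin s, a j * C) :=
        Real.prod_one_add_le_exp_sum _ fun j => mul_nonneg (ha j) hC
    _ ≤ Real.exp ((∑' j, a j) * C) := by
        rw [Real.exp_le_exp, ← sum_mul, Fin.sum_univ_eq_sum_range a s]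
        exact mul_le_mul_of_nonneg_right (hs.sum_le_tsum _ fun j _ => ha j) hC

section Walsh

variable {b : ℕ} {α γ τ : ℝ} {k : ℕ}

@[simp] theorem rho_zero : rho b α γ 0 = 1 := if_pos rfl

@[simp] theorem rho_one : rho b α γ 1 = γ := by simp [rho]

theorem rho_of_ne_zero (hk : k ≠ 0) : rho b α γ k = γ * rho b α 1 k := by simp [rho, hk]

theorem rho_nonneg (hγ : 0 ≤ γ) : 0 ≤ rho b α γ k := by
  unfold rho
  split_ifs
  · exact zero_le_one
  · exact mul_nonneg hγ (Real.rpow_nonneg b.cast_nonneg _)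

theorem rho_le_one (hb : 1 ≤ b) (hα : 0 ≤ α) (hγ₁ : γ ≤ 1) :
    rho b α γ k ≤ 1 := by
  unfold rho
  split_ifs
  · exact le_rfl
  · refine mul_le_one₀ hγ₁ (Real.rpow_nonneg b.cast_nonneg _)
      (Real.rpow_le_one_of_one_le_of_nonpos (by exact_mod_cast hb) ?_)
    exact neg_nonpos.mpr (by positivity)

theorem rho_one_le (hb : 1 < b) (hα : 0 ≤ α) (hk : k ≠ 0) :
    rho b α 1 k ≤ b ^ α * (k : ℝ) ^ (-α) := by
  have hb₀ : (0 : ℝ) < b := by positivity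
  have hk₀ : (0 : ℝ) < k := by positivity
  set m := Nat.log b k with hm
  have hk_lt : (k : ℝ) ≤ (b : ℝ) ^ (m + 1) := by
    exact_mod_cast (Nat.lt_pow_succ_log_self hb k).le
  calc rho b α 1 k = b ^ α * ((b : ℝ) ^ (m + 1)) ^ (-α) := by
        rw [rho, if_neg hk, ← hm, one_mul, ← Real.rpow_natCast, ← Real.rpow_mul hb₀.le,
          ← Real.rpow_add hb₀]
        push_cast
        ring_nf
    _ ≤ b ^ α * (k : ℝ) ^ (-α) :=
        mul_le_mul_of_nonneg_left
          (Real.rpow_le_rpow_of_nonpos hk₀ hk_lt (neg_nonpos.mpr hα)) (by positivity)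

theorem summable_rho_one_rpow (hb : 1 < b) (hα : 0 ≤ α) (hτ : 0 ≤ τ) (hατ : 1 < α * τ) :
    Summable fun k => rho b α 1 k ^ τ := by
  have hdecay : Summable fun k : ℕ => (b : ℝ) ^ (α * τ) * (k : ℝ) ^ (-(α * τ)) :=
    (Real.summable_nat_rpow.mpr (by linarith)).mul_left _
  refine hdecay.of_norm_bounded_eventually ?_
  filter_upwards [Filter.eventually_cofinite_ne 0] with k hk
  rw [Real.norm_of_nonneg (Real.rpow_nonneg (rho_nonneg zero_le_one) τ)]
  calc rho b α 1 k ^ τ ≤ ((b : ℝ) ^ α * (k : ℝ) ^ (-α)) ^ τ :=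
        Real.rpow_le_rpow (rho_nonneg zero_le_one) (rho_one_le hb hα hk) hτ
    _ = (b : ℝ) ^ (α * τ) * (k : ℝ) ^ (-(α * τ)) := by
        rw [Real.mul_rpow (by positivity) (by positivity), ← Real.rpow_mul (by positivity),
          ← Real.rpow_mul (by positivity), neg_mul]

theorem summable_rho_rpow (hb : 1 < b) (hα : 0 ≤ α) (hγ : 0 ≤ γ) (hτ : 0 ≤ τ)
    (hατ : 1 < α * τ) :
    Summable fun k => rho b α γ k ^ τ :=
  summable_of_sum_le (fun _ => Real.rpow_nonneg (rho_nonneg hγ) τ)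
    (sum_rpow_le_one_add_mul_tsum hγ (fun _ => rho_nonneg zero_le_one)
      (summable_rho_one_rpow hb hα hτ hατ) rho_zero fun _ hk => rho_of_ne_zero hk)

theorem tsum_rho_rpow_le (hb : 1 < b) (hα : 0 ≤ α) (hγ : 0 ≤ γ) (hτ : 0 ≤ τ)
    (hατ : 1 < α * τ) :
    ∑' k, rho b α γ k ^ τ ≤ 1 + γ ^ τ * ∑' k, rho b α 1 k ^ τ :=
  Real.tsum_le_of_sum_le (fun _ => Real.rpow_nonneg (rho_nonneg hγ) τ)
    (sum_rpow_le_one_add_mul_tsum hγ (fun _ => rho_nonneg zero_le_one)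
      (summable_rho_one_rpow hb hα hτ hατ) rho_zero fun _ hk => rho_of_ne_zero hk)

end Walsh

section Korobov

variable {β γ τ : ℝ} {l : ℤ}

@[simp] theorem rK_zero : rK β γ 0 = 1 := if_pos rfl

@[simp] theorem rK_one : rK β γ 1 = γ := by simp [rK]

theorem rK_of_ne_zero (hl : l ≠ 0) : rK β γ l = γ * rK β 1 l := by simp [rK, hl]

theorem rK_nonneg (hγ : 0 ≤ γ) : 0 ≤ rK β γ l := by
  unfold rK
  split_ifs
  · exact zero_le_one
  · exact mul_nonneg hγ (Real.rpow_nonneg (abs_nonneg _) _)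

theorem rK_le_one (hβ : 0 ≤ β) (hγ₁ : γ ≤ 1) : rK β γ l ≤ 1 := by
  unfold rK
  split_ifs with hl
  · exact le_rfl
  · have hl_abs : (1 : ℝ) ≤ |(l : ℝ)| := by exact_mod_cast Int.one_le_abs hl
    exact mul_le_one₀ hγ₁ (Real.rpow_nonneg (abs_nonneg _) _)
      (Real.rpow_le_one_of_one_le_of_nonpos hl_abs (neg_nonpos.mpr hβ))

theorem summable_rK_one_rpow (hβτ : 1 < β * τ) : Summable fun l => rK β 1 l ^ τ := by
  refine (Real.summable_abs_int_rpow hβτ).of_norm_bounded_eventually ?_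
  filter_upwards [Filter.eventually_cofinite_ne 0] with l hl
  rw [Real.norm_of_nonneg (Real.rpow_nonneg (rK_nonneg zero_le_one) τ), rK, if_neg hl,
    one_mul, ← Real.rpow_mul (abs_nonneg _), neg_mul]

theorem summable_rK_rpow (hγ : 0 ≤ γ) (hβτ : 1 < β * τ) : Summable fun l => rK β γ l ^ τ :=
  summable_of_sum_le (fun _ => Real.rpow_nonneg (rK_nonneg hγ) τ)
    (sum_rpow_le_one_add_mul_tsum hγ (fun _ => rK_nonneg zero_le_one)
      (summable_rK_one_rpow hβτ) rK_zero fun _ hl => rK_of_ne_zero hl)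

theorem tsum_rK_rpow_le (hγ : 0 ≤ γ) (hβτ : 1 < β * τ) :
    ∑' l, rK β γ l ^ τ ≤ 1 + γ ^ τ * ∑' l, rK β 1 l ^ τ :=
  Real.tsum_le_of_sum_le (fun _ => Real.rpow_nonneg (rK_nonneg hγ) τ)
    (sum_rpow_le_one_add_mul_tsum hγ (fun _ => rK_nonneg zero_le_one)
      (summable_rK_one_rpow hβτ) rK_zero fun _ hl => rK_of_ne_zero hl)

end Korobov

theorem Summable.rpow_of_exponent_le {a : ℕ → ℝ} (ha₀ : ∀ j, 0 < a j) (ha₁ : ∀ j, a j ≤ 1)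
    {κ κ' : ℝ} (hκ : κ ≤ κ') (hs : Summable fun j => a j ^ κ) :
    Summable fun j => a j ^ κ' :=
  hs.of_nonneg_of_le (fun j => Real.rpow_nonneg (ha₀ j).le _)
    fun j => Real.rpow_le_rpow_of_exponent_ge (ha₀ j) (ha₁ j) hκ

theorem summable_rpow_of_card_lt_le {a : ℕ → ℝ} (ha₀ : ∀ j, 0 < a j) (ha₁ : ∀ j, a j ≤ 1)
    {C p : ℝ} (hC : 0 ≤ C) (hp : 0 ≤ p)
    (hcard : ∀ δ, 0 < δ → δ < 1 → ∀ s, (#{i : Fin s | δ < a i} : ℝ) ≤ C * δ ^ (-p)) :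
    Summable fun j => a j ^ (p + 1) := by
  choose n hn using fun j => exists_nat_pow_near_of_lt_one (ha₀ j) (ha₁ j)
    (by norm_num : (0 : ℝ) < 1 / 2) (by norm_num)
  -- shell `m` has at most `C 2 ^ ((m + 1) p)` members, each contributing at most `2 ^ (-m (p + 1))`
  have hfiber : ∀ s m, ∑ i ∈ univ.filter (fun i : Fin s => n i = m), a i ^ (p + 1) ≤
      C * 2 ^ p * (1 / 2) ^ m := by
    intro s m
    set x : ℝ := (1 / 2) ^ m
    have hx : 0 < x := by positivity
    have hδ : (1 / 2 : ℝ) ^ (m + 1) < 1 := pow_lt_one₀ (by norm_num) (by norm_num) (by omega)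
    calc _ ≤ #{i : Fin s | n i = m} * x ^ (p + 1) := by
          rw [← nsmul_eq_mul]
          refine sum_le_card_nsmul _ _ _ fun i hi => ?_
          rw [show x = (1 / 2) ^ n i by rw [(mem_filter.mp hi).2]]
          exact Real.rpow_le_rpow (ha₀ i).le (hn i).2 (by linarith)
      _ ≤ #{i : Fin s | (1 / 2 : ℝ) ^ (m + 1) < a i} * x ^ (p + 1) := by
          gcongr with i
          exact fun hi => hi ▸ (hn i).1
      _ ≤ C * ((1 / 2 : ℝ) ^ (m + 1)) ^ (-p) * x ^ (p + 1) := by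
          gcongr
          exact hcard _ (by positivity) hδ s
      _ = C * 2 ^ p * x := by
          have hhalf : ((1 / 2 : ℝ) ^ (m + 1)) ^ (-p) = 2 ^ p * (x ^ p)⁻¹ := by
            rw [pow_succ, Real.mul_rpow hx.le (by norm_num), Real.rpow_neg hx.le,
              Real.rpow_neg (by norm_num), one_div, Real.inv_rpow (by norm_num), inv_inv,
              mul_comm]
          have hxp : x ^ p ≠ 0 := (Real.rpow_pos_of_pos hx p).ne'
          rw [hhalf, Real.rpow_add_one hx.ne']
          field_simp
  refine summable_of_sum_range_le (c := C * 2 ^ p * 2)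
    (fun j => Real.rpow_nonneg (ha₀ j).le _) fun s => ?_
  have hmaps : ∀ i ∈ (univ : Finset (Fin s)), n i ∈ range ((univ.sup fun i : Fin s => n i) + 1) :=
    fun i _ => mem_range.mpr (Nat.lt_succ_of_le (le_sup (f := fun i : Fin s => n i) (mem_univ i)))
  rw [← Fin.sum_univ_eq_sum_range, ← sum_fiberwise_of_maps_to hmaps]
  calc _ ≤ ∑ m ∈ range ((univ.sup fun i : Fin s => n i) + 1), C * 2 ^ p * (1 / 2) ^ m :=
        sum_le_sum fun m _ => hfiber s m
    _ ≤ C * 2 ^ p * 2 := by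
        rw [← mul_sum]
        exact mul_le_mul_of_nonneg_left (sum_geometric_two_le _) (by positivity)

section Ncount

variable {b : ℕ} {α β : ℝ} {γ1 γ2 : ℕ → ℝ}

theorem finite_setOf_Ncount (hb : 1 < b) (hα : 1 < α) (hβ : 1 < β)
    (hγ1 : ∀ j, 0 ≤ γ1 j ∧ γ1 j ≤ 1) (hγ2 : ∀ j, 0 ≤ γ2 j ∧ γ2 j ≤ 1) {ε : ℝ} (hε : 0 < ε)
    (s t : ℕ) :
    {p : (Fin s → ℕ) × (Fin t → ℤ) |
      (∏ j : Fin s, rho b α (γ1 j) (p.1 j)) * (∏ j : Fin t, rK β (γ2 j) (p.2 j)) > ε ^ 2}.Finite :=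
  finite_setOf_lt_mul_prod (f := fun j : Fin s => rho b α (γ1 j))
    (g := fun j : Fin t => rK β (γ2 j)) (fun j _ => rho_nonneg (hγ1 j).1)
    (fun j _ => rho_le_one hb.le (by linarith) (hγ1 j).2) (fun j _ => rK_nonneg (hγ2 j).1)
    (fun j _ => rK_le_one (by linarith) (hγ2 j).2) one_pos (pow_pos hε 2)
    (fun j => summable_rho_rpow hb (by linarith) (hγ1 j).1 zero_le_one (by linarith))
    (fun j => summable_rK_rpow (hγ2 j).1 (by linarith))

theorem Ncount_le_exp_mul (hb : 1 < b) (hα : 1 < α) (hβ : 1 < β)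
    (hγ1 : ∀ j, 0 ≤ γ1 j ∧ γ1 j ≤ 1) (hγ2 : ∀ j, 0 ≤ γ2 j ∧ γ2 j ≤ 1) {τ : ℝ} (hτ : 1 ≤ τ)
    (hs1 : Summable fun j => γ1 j ^ τ) (hs2 : Summable fun j => γ2 j ^ τ) {ε : ℝ}
    (hε : 0 < ε) (s t : ℕ) :
    (Ncount b α β γ1 γ2 ε s t : ℝ) ≤
      Real.exp ((∑' j, γ1 j ^ τ) * (∑' k, rho b α 1 k ^ τ) +
        (∑' j, γ2 j ^ τ) * ∑' l, rK β 1 l ^ τ) * ε ^ (-(2 * τ)) := by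
  have hατ : 1 < α * τ := by nlinarith
  have hβτ : 1 < β * τ := by nlinarith
  have hε2 : 0 < (ε ^ 2) ^ τ := Real.rpow_pos_of_pos (pow_pos hε 2) τ
  have hρ₀ : 0 ≤ ∑' k, rho b α 1 k ^ τ :=
    tsum_nonneg fun _ => Real.rpow_nonneg (rho_nonneg zero_le_one) τ
  have hr₀ : 0 ≤ ∑' l, rK β 1 l ^ τ :=
    tsum_nonneg fun _ => Real.rpow_nonneg (rK_nonneg zero_le_one) τ
  have hρ_tsum : ∀ j, 0 ≤ ∑' k, rho b α (γ1 j) k ^ τ := fun j =>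
    tsum_nonneg fun _ => Real.rpow_nonneg (rho_nonneg (hγ1 j).1) τ
  have hr_tsum : ∀ j, 0 ≤ ∑' l, rK β (γ2 j) l ^ τ := fun j =>
    tsum_nonneg fun _ => Real.rpow_nonneg (rK_nonneg (hγ2 j).1) τ
  have hpow : ε ^ (-(2 * τ)) = ((ε ^ 2) ^ τ)⁻¹ := by
    rw [Real.rpow_neg hε.le, Real.rpow_mul hε.le]
    norm_cast
  rw [hpow, ← div_eq_mul_inv, le_div_iff₀ hε2]
  calc (Ncount b α β γ1 γ2 ε s t : ℝ) * (ε ^ 2) ^ τ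
      ≤ (∏ j : Fin s, ∑' k, rho b α (γ1 j) k ^ τ) * ∏ j : Fin t, ∑' l, rK β (γ2 j) l ^ τ :=
        ncard_setOf_lt_mul_prod_mul_rpow_le (f := fun j : Fin s => rho b α (γ1 j))
          (g := fun j : Fin t => rK β (γ2 j)) (fun j _ => rho_nonneg (hγ1 j).1)
          (fun j _ => rho_le_one hb.le (by linarith) (hγ1 j).2) (fun j _ => rK_nonneg (hγ2 j).1)
          (fun j _ => rK_le_one (by linarith) (hγ2 j).2) (by linarith) (pow_pos hε 2)
          (fun j => summable_rho_rpow hb (by linarith) (hγ1 j).1 (by linarith) hατ)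
          (fun j => summable_rK_rpow (hγ2 j).1 hβτ)
    _ ≤ (∏ j : Fin s, (1 + γ1 j ^ τ * ∑' k, rho b α 1 k ^ τ)) *
          ∏ j : Fin t, (1 + γ2 j ^ τ * ∑' l, rK β 1 l ^ τ) :=
        mul_le_mul
          (prod_le_prod (fun j _ => hρ_tsum j) fun j _ =>
            tsum_rho_rpow_le hb (by linarith) (hγ1 j).1 (by linarith) hατ)
          (prod_le_prod (fun j _ => hr_tsum j) fun j _ => tsum_rK_rpow_le (hγ2 j).1 hβτ)
          (prod_nonneg fun j _ => hr_tsum j)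
          (prod_nonneg fun j _ => add_nonneg zero_le_one
            (mul_nonneg (Real.rpow_nonneg (hγ1 j).1 τ) hρ₀))
    _ ≤ Real.exp ((∑' j, γ1 j ^ τ) * ∑' k, rho b α 1 k ^ τ) *
          Real.exp ((∑' j, γ2 j ^ τ) * ∑' l, rK β 1 l ^ τ) :=
        mul_le_mul
          (prod_one_add_mul_le_exp_tsum (fun j => Real.rpow_nonneg (hγ1 j).1 τ) hs1 hρ₀ s)
          (prod_one_add_mul_le_exp_tsum (fun j => Real.rpow_nonneg (hγ2 j).1 τ) hs2 hr₀ t)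
          (prod_nonneg fun j _ => add_nonneg zero_le_one
            (mul_nonneg (Real.rpow_nonneg (hγ2 j).1 τ) hr₀))
          (Real.exp_pos _).le
    _ = _ := (Real.exp_add _ _).symm

theorem card_lt_le_Ncount_left (hb : 1 < b) (hα : 1 < α) (hβ : 1 < β)
    (hγ1 : ∀ j, 0 ≤ γ1 j ∧ γ1 j ≤ 1) (hγ2 : ∀ j, 0 ≤ γ2 j ∧ γ2 j ≤ 1) {ε : ℝ} (hε : 0 < ε)
    (s t : ℕ) : #{i : Fin s | ε ^ 2 < γ1 i} ≤ Ncount b α β γ1 γ2 ε s t := by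
  classical
  rw [← Set.ncard_coe_finset, Ncount]
  refine Set.ncard_le_ncard_of_injOn (fun i => (Pi.single i 1, 0)) (fun i hi => ?_)
    (fun i _ i' _ h => ?_) (finite_setOf_Ncount hb hα hβ hγ1 hγ2 hε s t)
  · have hprod : ∏ j : Fin s, rho b α (γ1 j) ((Pi.single i 1 : Fin s → ℕ) j) = γ1 i := by
      rw [Fintype.prod_eq_single i fun j hj => by rw [Pi.single_eq_of_ne hj, rho_zero],
        Pi.single_eq_same, rho_one]
    simpa [hprod] using hi
  · by_contra hne
    simpa [Pi.single_apply, Ne.symm hne] using congrFun (congrArg Prod.fst h) i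

theorem card_lt_le_Ncount_right (hb : 1 < b) (hα : 1 < α) (hβ : 1 < β)
    (hγ1 : ∀ j, 0 ≤ γ1 j ∧ γ1 j ≤ 1) (hγ2 : ∀ j, 0 ≤ γ2 j ∧ γ2 j ≤ 1) {ε : ℝ} (hε : 0 < ε)
    (s t : ℕ) : #{i : Fin t | ε ^ 2 < γ2 i} ≤ Ncount b α β γ1 γ2 ε s t := by
  classical
  rw [← Set.ncard_coe_finset, Ncount]
  refine Set.ncard_le_ncard_of_injOn (fun i => (0, Pi.single i 1)) (fun i hi => ?_)
    (fun i _ i' _ h => ?_) (finite_setOf_Ncount hb hα hβ hγ1 hγ2 hε s t)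
  · have hprod : ∏ j : Fin t, rK β (γ2 j) ((Pi.single i 1 : Fin t → ℤ) j) = γ2 i := by
      rw [Fintype.prod_eq_single i fun j hj => by rw [Pi.single_eq_of_ne hj, rK_zero],
        Pi.single_eq_same, rK_one]
    simpa [hprod] using hi
  · by_contra hne
    simpa [Pi.single_apply, Ne.symm hne] using congrFun (congrArg Prod.snd h) i

end Ncount

theorem sGamma_lt_top_iff {γ1 γ2 : ℕ → ℝ} :
    sGamma γ1 γ2 < ⊤ ↔ ∃ κ : ℝ, 0 < κ ∧ Summable (fun j => γ1 j ^ κ) ∧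
      Summable (fun j => γ2 j ^ κ) := by
  rw [sGamma, sInf_lt_iff]
  constructor
  · rintro ⟨_, ⟨κ, hκ, -, hs1, hs2⟩, -⟩
    exact ⟨κ, hκ, hs1, hs2⟩
  · rintro ⟨κ, hκ, hs1, hs2⟩
    exact ⟨_, ⟨κ, hκ, rfl, hs1, hs2⟩, ENNReal.ofReal_lt_top⟩

theorem summable_rpow_of_Ncount_le {b : ℕ} {α β : ℝ} {γ1 γ2 : ℕ → ℝ} (hb : 1 < b)
    (hα : 1 < α) (hβ : 1 < β) (hγ1 : ∀ j, 0 < γ1 j ∧ γ1 j ≤ 1) (hγ2 : ∀ j, 0 < γ2 j ∧ γ2 j ≤ 1)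
    {C τ : ℝ} (hC : 0 ≤ C) (hτ : 0 ≤ τ)
    (hN : ∀ ε : ℝ, 0 < ε → ε < 1 → ∀ s t : ℕ, (Ncount b α β γ1 γ2 ε s t : ℝ) ≤ C * ε ^ (-τ)) :
    Summable (fun j => γ1 j ^ (τ / 2 + 1)) ∧ Summable (fun j => γ2 j ^ (τ / 2 + 1)) := by
  have hγ1' : ∀ j, 0 ≤ γ1 j ∧ γ1 j ≤ 1 := fun j => ⟨(hγ1 j).1.le, (hγ1 j).2⟩
  have hγ2' : ∀ j, 0 ≤ γ2 j ∧ γ2 j ≤ 1 := fun j => ⟨(hγ2 j).1.le, (hγ2 j).2⟩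
  have hN_sqrt : ∀ δ, 0 < δ → δ < 1 → ∀ s t,
      (Ncount b α β γ1 γ2 √δ s t : ℝ) ≤ C * δ ^ (-(τ / 2)) := by
    intro δ hδ₀ hδ₁ s t
    have hpow : √δ ^ (-τ) = δ ^ (-(τ / 2)) := by
      rw [Real.sqrt_eq_rpow, ← Real.rpow_mul hδ₀.le]
      ring_nf
    rw [← hpow]
    exact hN √δ (Real.sqrt_pos.mpr hδ₀) ((Real.sqrt_lt' one_pos).mpr (by simpa using hδ₁)) s t
  constructor
  · refine summable_rpow_of_card_lt_le (fun j => (hγ1 j).1) (fun j => (hγ1 j).2) hC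
      (by positivity) fun δ hδ₀ hδ₁ s => le_trans ?_ (hN_sqrt δ hδ₀ hδ₁ s 0)
    have h := card_lt_le_Ncount_left hb hα hβ hγ1' hγ2' (Real.sqrt_pos.mpr hδ₀) s 0
    rw [Real.sq_sqrt hδ₀.le] at h
    exact_mod_cast h
  · refine summable_rpow_of_card_lt_le (fun j => (hγ2 j).1) (fun j => (hγ2 j).2) hC
      (by positivity) fun δ hδ₀ hδ₁ t => le_trans ?_ (hN_sqrt δ hδ₀ hδ₁ 0 t)
    have h := card_lt_le_Ncount_right hb hα hβ hγ1' hγ2' (Real.sqrt_pos.mpr hδ₀) 0 t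
    rw [Real.sq_sqrt hδ₀.le] at h
    exact_mod_cast h

theorem stmt_9 (b : ℕ) (hb : b.Prime) (α β : ℝ) (hα : 1 < α) (hβ : 1 < β)
    (γ1 γ2 : ℕ → ℝ) (hγ1 : ∀ j, 0 < γ1 j ∧ γ1 j ≤ 1) (hγ2 : ∀ j, 0 < γ2 j ∧ γ2 j ≤ 1) :
    (∃ C τ : ℝ, 0 ≤ C ∧ 0 ≤ τ ∧ ∀ ε : ℝ, 0 < ε → ε < 1 → ∀ s t : ℕ,
        (Ncount b α β γ1 γ2 ε s t : ℝ) ≤ C * ε ^ (-τ))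
      ↔ sGamma γ1 γ2 < ⊤ := by
  rw [sGamma_lt_top_iff]
  constructor
  · rintro ⟨C, τ, hC, hτ, hN⟩
    obtain ⟨hs1, hs2⟩ := summable_rpow_of_Ncount_le hb.one_lt hα hβ hγ1 hγ2 hC hτ hN
    exact ⟨τ / 2 + 1, by positivity, hs1, hs2⟩
  · rintro ⟨κ, hκ, hs1, hs2⟩
    have hN := fun ε (hε : 0 < ε) => Ncount_le_exp_mul (τ := κ + 1) hb.one_lt hα hβ
      (fun j => ⟨(hγ1 j).1.le, (hγ1 j).2⟩) (fun j => ⟨(hγ2 j).1.le, (hγ2 j).2⟩) (by linarith)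
      (hs1.rpow_of_exponent_le (fun j => (hγ1 j).1) (fun j => (hγ1 j).2) (by linarith))
      (hs2.rpow_of_exponent_le (fun j => (hγ2 j).1) (fun j => (hγ2 j).2) (by linarith)) hε
    exact ⟨_, _, (Real.exp_pos _).le, by positivity, fun ε hε _ => hN ε hε⟩
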